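/- There exists a constant C > 0 such that for every n ≥ 2, Σ_{t : n(t) = n} w(t)·log(1 + 1/c(t)) ≤ C·(9/10)^n, where the sum ranges over all plane binary trees t with n leaves. In other words, the Yule–Harding mean of the toll function log(1 + 1/c_r) converges to 0 exponentially fast, at rate O(0.9^n). -/

import Mathlib

/-- Plane binary trees: a leaf, or an ordered pair of plane binary trees. -/
inductive PTree : Type where
  | leaf : PTree
  | node : PTree → PTree → PTree
deriving DecidableEq

namespace PTree

/-- Number of leaves of a plane binary tree. -/
def leaves : PTree → ℕ
  | leaf => 1
  | node l r => leaves l + leaves r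

/-- Number of root ancestral configurations:
`c(leaf) = 0`, `c(node l r) = (c l + 1) * (c r + 1)`. -/
def c : PTree → ℕ
  | leaf => 0
  | node l r => (c l + 1) * (c r + 1)

/-- The finite set of plane binary trees with `n` leaves. -/
def trees : ℕ → Finset PTree
  | 0 => ∅
  | 1 => {leaf}
  | (n+2) =>
      (Finset.Icc 1 (n+1)).attach.biUnion fun j =>
        ((trees j.1) ×ˢ (trees (n+2-j.1))).image fun p => node p.1 p.2
decreasing_by
  · have h := Finset.mem_Icc.mp j.2; omega
  · have h := Finset.mem_Icc.mp j.2; omega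

end PTree

namespace PTree

/-- Yule–Harding weight: `w(leaf) = 1`,
`w(node l r) = w l * w r / (leaves l + leaves r - 1)`. -/
def w : PTree → ℚ
  | leaf => 1
  | node l r => w l * w r / ((leaves l + leaves r - 1 : ℕ) : ℚ)

end PTree

/-!
Let `H n` and `G n` be the Yule–Harding means of `1 / (c + 1)` and `1 / c` over trees with `n`
leaves. The Yule–Harding law picks the size of the left subtree uniformly in `1, …, n - 1` and
then the two subtrees independently, and `c (node l r) = (c l + 1) (c r + 1)`; hence
`G n = (∑_{j=1}^{n-1} H j H (n - j)) / (n - 1)`. Since `H 1 = 1` and `H n ≤ G n ≤ 1` for `n ≥ 2`,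
this convolution propagates the bound `H k ≤ (3/4) 0.9^k` from `k < n` to `n` once `n ≥ 4`,
and then gives `G n ≤ 2 · 0.9^n`. Finally `log (1 + x) ≤ x`.
-/
namespace PTree

theorem leaves_of_mem_trees : ∀ {n : ℕ} {t : PTree}, t ∈ trees n → leaves t = n
  | 0, t, ht => by simp [trees] at ht
  | 1, t, ht => by simp_all [trees, leaves]
  | n + 2, t, ht => by
    rw [trees] at ht
    simp only [Finset.mem_biUnion, Finset.mem_image, Finset.mem_product,
      Finset.mem_attach, true_and] at ht
    obtain ⟨j, p, ⟨hl, hr⟩, rfl⟩ := ht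
    have hj := Finset.mem_Icc.mp j.2
    have := leaves_of_mem_trees hl
    have := leaves_of_mem_trees hr
    simp only [leaves]
    omega

theorem sum_trees_add_two {M : Type*} [AddCommMonoid M] (F : PTree → M) (m : ℕ) :
    ∑ t ∈ trees (m + 2), F t =
      ∑ j ∈ Finset.Icc 1 (m + 1), ∑ l ∈ trees j, ∑ r ∈ trees (m + 2 - j), F (node l r) := by
  rw [trees, Finset.sum_biUnion, ← Finset.sum_attach (Finset.Icc 1 (m + 1))]
  · refine Finset.sum_congr rfl fun j _ => ?_
    rw [Finset.sum_image fun p _ q _ h => by cases p; cases q; injection h; simp_all,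
      Finset.sum_product]
  · intro j _ k _ hjk
    simp only [Function.onFun, Finset.disjoint_left, Finset.mem_image, Finset.mem_product]
    rintro _ ⟨⟨l, r⟩, ⟨hl, -⟩, rfl⟩ ⟨⟨l', r'⟩, ⟨hl', -⟩, h⟩
    cases h
    exact hjk (Subtype.ext ((leaves_of_mem_trees hl).symm.trans (leaves_of_mem_trees hl')))

theorem one_le_c_of_mem_trees {n : ℕ} {t : PTree} (hn : 2 ≤ n) (ht : t ∈ trees n) : 1 ≤ c t := by
  cases t with
  | leaf => have := leaves_of_mem_trees ht; simp only [leaves] at this; omega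
  | node l r => exact Nat.one_le_iff_ne_zero.mpr (by simp [c])

theorem w_nonneg (t : PTree) : 0 ≤ w t := by
  induction t with
  | leaf => norm_num [w]
  | node l r hl hr => exact div_nonneg (mul_nonneg hl hr) (Nat.cast_nonneg _)

def yuleMean (n : ℕ) (f : PTree → ℝ) : ℝ :=
  ∑ t ∈ trees n, (w t : ℝ) * f t

theorem yuleMean_mono {n : ℕ} {f g : PTree → ℝ} (hfg : ∀ t ∈ trees n, f t ≤ g t) :
    yuleMean n f ≤ yuleMean n g :=
  Finset.sum_le_sum fun t ht =>
    mul_le_mul_of_nonneg_left (hfg t ht) (by exact_mod_cast w_nonneg t)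

theorem yuleMean_nonneg {n : ℕ} {f : PTree → ℝ} (hf : ∀ t, 0 ≤ f t) : 0 ≤ yuleMean n f :=
  Finset.sum_nonneg fun t _ => mul_nonneg (by exact_mod_cast w_nonneg t) (hf t)

theorem yuleMean_add_two_of_node {F f g : PTree → ℝ} (hF : ∀ l r, F (node l r) = f l * g r)
    (m : ℕ) :
    yuleMean (m + 2) F =
      (∑ j ∈ Finset.Icc 1 (m + 1), yuleMean j f * yuleMean (m + 2 - j) g) / (m + 1) := by
  rw [yuleMean, sum_trees_add_two, Finset.sum_div]
  refine Finset.sum_congr rfl fun j hj => ?_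
  have hj := Finset.mem_Icc.mp hj
  rw [yuleMean, yuleMean, Finset.sum_mul_sum, Finset.sum_div]
  refine Finset.sum_congr rfl fun l hl => ?_
  rw [Finset.sum_div]
  refine Finset.sum_congr rfl fun r hr => ?_
  have hsize : leaves l + leaves r - 1 = m + 1 := by
    rw [leaves_of_mem_trees hl, leaves_of_mem_trees hr]
    omega
  rw [hF, w, hsize]
  push_cast
  ring

theorem yuleMean_one {n : ℕ} (hn : 1 ≤ n) : yuleMean n 1 = 1 := by
  induction n using Nat.strong_induction_on with
  | _ n ih =>
    match n with
    | 1 => simp [yuleMean, trees, w]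
    | m + 2 =>
      have hterm : ∀ j ∈ Finset.Icc 1 (m + 1), yuleMean j 1 * yuleMean (m + 2 - j) 1 = 1 := by
        intro j hj
        have hj := Finset.mem_Icc.mp hj
        rw [ih j (by omega) hj.1, ih (m + 2 - j) (by omega) (by omega), mul_one]
      rw [yuleMean_add_two_of_node (f := 1) (g := 1) (fun _ _ => (mul_one 1).symm),
        Finset.sum_congr rfl hterm, Finset.sum_const, Nat.card_Icc, nsmul_one]
      push_cast
      field_simp

theorem yuleMean_const {n : ℕ} (hn : 1 ≤ n) (a : ℝ) : (yuleMean n fun _ => a) = a := by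
  simpa [yuleMean, ← Finset.sum_mul] using congrArg (· * a) (yuleMean_one hn)

noncomputable def invSuccMean (n : ℕ) : ℝ :=
  yuleMean n fun t => ((c t : ℝ) + 1)⁻¹

theorem invSuccMean_one : invSuccMean 1 = 1 := by
  simp [invSuccMean, yuleMean, trees, w, c]

theorem invSuccMean_nonneg (n : ℕ) : 0 ≤ invSuccMean n :=
  yuleMean_nonneg fun _ => by positivity

theorem invSuccMean_le_half {n : ℕ} (hn : 2 ≤ n) : invSuccMean n ≤ 1 / 2 := by
  calc invSuccMean n ≤ yuleMean n fun _ => 1 / 2 := yuleMean_mono fun t ht => by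
        have : (1 : ℝ) ≤ c t := by exact_mod_cast one_le_c_of_mem_trees hn ht
        rw [inv_le_comm₀ (by positivity) (by norm_num)]
        linarith
    _ = 1 / 2 := yuleMean_const (by omega) _

theorem yuleMean_inv_c_add_two (m : ℕ) :
    yuleMean (m + 2) (fun t => (c t : ℝ)⁻¹) =
      (∑ j ∈ Finset.Icc 1 (m + 1), invSuccMean j * invSuccMean (m + 2 - j)) / (m + 1) :=
  yuleMean_add_two_of_node (fun l r => by simp only [c]; push_cast; rw [mul_inv]) m

theorem invSuccMean_le_yuleMean_inv_c {n : ℕ} (hn : 2 ≤ n) :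
    invSuccMean n ≤ yuleMean n fun t => (c t : ℝ)⁻¹ :=
  yuleMean_mono fun t ht => by
    have : (1 : ℝ) ≤ c t := by exact_mod_cast one_le_c_of_mem_trees hn ht
    gcongr
    linarith

theorem yuleMean_inv_c_le_one {n : ℕ} (hn : 2 ≤ n) : yuleMean n (fun t => (c t : ℝ)⁻¹) ≤ 1 := by
  calc yuleMean n (fun t => (c t : ℝ)⁻¹) ≤ yuleMean n fun _ => 1 := yuleMean_mono fun t ht =>
        inv_le_one_of_one_le₀ (by exact_mod_cast one_le_c_of_mem_trees hn ht)
    _ = 1 := yuleMean_const (by omega) 1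

end PTree

/-- The two boundary terms `a 1 a (m + 1)` contribute `O(0.9^m / m)` and each of the `m - 1`
inner terms is at most `(3/4)² 0.9^(m+2)`, which beats `(3/4) 0.9^(m+2)` on average once `m ≥ 2`. -/
theorem conv_div_le_of_le_pow {a : ℕ → ℝ} (ha_one : a 1 = 1) (ha_nonneg : ∀ k, 0 ≤ a k)
    {m : ℕ} (hm : 2 ≤ m) (ha : ∀ k, 2 ≤ k → k ≤ m + 1 → a k ≤ 3 / 4 * (9 / 10) ^ k) :
    (∑ j ∈ Finset.Icc 1 (m + 1), a j * a (m + 2 - j)) / (m + 1) ≤ 3 / 4 * (9 / 10) ^ (m + 2) := by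
  have hsplit : Finset.Icc 1 (m + 1) = insert 1 (insert (m + 1) (Finset.Icc 2 m)) := by
    ext x; simp only [Finset.mem_Icc, Finset.mem_insert]; omega
  have hinner : ∑ j ∈ Finset.Icc 2 m, a j * a (m + 2 - j)
      ≤ ∑ _j ∈ Finset.Icc 2 m, 9 / 16 * (9 / 10 : ℝ) ^ (m + 2) := by
    refine Finset.sum_le_sum fun j hj => ?_
    have hj := Finset.mem_Icc.mp hj
    calc a j * a (m + 2 - j)
        ≤ (3 / 4 * (9 / 10) ^ j) * (3 / 4 * (9 / 10) ^ (m + 2 - j)) :=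
          mul_le_mul (ha j hj.1 (by omega)) (ha _ (by omega) (by omega)) (ha_nonneg _)
            (by positivity)
      _ = 9 / 16 * (9 / 10 : ℝ) ^ (j + (m + 2 - j)) := by rw [pow_add]; ring
      _ = 9 / 16 * (9 / 10 : ℝ) ^ (m + 2) := by rw [Nat.add_sub_cancel' (by omega)]
  have hcard : ((Finset.Icc 2 m).card : ℝ) = m - 1 := by
    rw [Nat.card_Icc, Nat.cast_sub (by omega)]; push_cast; ring
  rw [Finset.sum_const, nsmul_eq_mul, hcard] at hinner
  have hboundary := ha (m + 1) (by omega) le_rfl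
  rw [hsplit, Finset.sum_insert (by simp; omega), Finset.sum_insert (by simp),
    show m + 2 - 1 = m + 1 by omega, show m + 2 - (m + 1) = 1 by omega, ha_one,
    div_le_iff₀ (by positivity)]
  have hm' : (2 : ℝ) ≤ m := by exact_mod_cast hm
  have hpow : (0 : ℝ) < (9 / 10) ^ m := by positivity
  rw [pow_succ] at hboundary
  rw [pow_add] at hinner ⊢
  nlinarith

namespace PTree

theorem invSuccMean_le_pow {n : ℕ} (hn : 2 ≤ n) : invSuccMean n ≤ 3 / 4 * (9 / 10) ^ n := by
  induction n using Nat.strong_induction_on with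
  | _ n ih =>
    match n, hn with
    | 2, _ => linarith [invSuccMean_le_half le_rfl]
    | 3, _ => linarith [invSuccMean_le_half (n := 3) (by norm_num)]
    | m + 4, _ =>
      calc invSuccMean (m + 4) ≤ yuleMean (m + 2 + 2) fun t => (c t : ℝ)⁻¹ :=
            invSuccMean_le_yuleMean_inv_c (by omega)
        _ ≤ 3 / 4 * (9 / 10) ^ (m + 4) := by
            rw [yuleMean_inv_c_add_two]
            exact_mod_cast conv_div_le_of_le_pow invSuccMean_one invSuccMean_nonneg
              (m := m + 2) (by omega) fun k hk _ => ih k (by omega) hk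

theorem yuleMean_inv_c_le_pow {n : ℕ} (hn : 2 ≤ n) :
    yuleMean n (fun t => (c t : ℝ)⁻¹) ≤ 2 * (9 / 10) ^ n := by
  match n, hn with
  | 2, _ => linarith [yuleMean_inv_c_le_one le_rfl]
  | 3, _ => linarith [yuleMean_inv_c_le_one (n := 3) (by norm_num)]
  | m + 4, _ =>
    have h := conv_div_le_of_le_pow invSuccMean_one invSuccMean_nonneg (m := m + 2) (by omega)
      fun k hk _ => invSuccMean_le_pow hk
    rw [← yuleMean_inv_c_add_two] at h
    linarith [pow_pos (by norm_num : (0 : ℝ) < 9 / 10) (m + 4)]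

end PTree

/-- The Yule–Harding mean of the toll function `log(1 + 1/c_r)` decays to `0`
exponentially fast, at rate `O(0.9^n)`. -/
theorem toll_mean_exponential_decay :
    ∃ C : ℝ, 0 < C ∧ ∀ n : ℕ, 2 ≤ n →
      ∑ t ∈ PTree.trees n, (PTree.w t : ℝ) * Real.log (1 + 1 / (PTree.c t : ℝ)) ≤
        C * (9 / 10 : ℝ) ^ n := by
  refine ⟨2, two_pos, fun n hn => ?_⟩
  calc PTree.yuleMean n (fun t => Real.log (1 + 1 / (PTree.c t : ℝ)))
      ≤ PTree.yuleMean n (fun t => (PTree.c t : ℝ)⁻¹) := PTree.yuleMean_mono fun t _ => by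
        have := Real.log_le_sub_one_of_pos (x := 1 + 1 / (PTree.c t : ℝ)) (by positivity)
        simpa only [one_div, add_sub_cancel_left] using this
    _ ≤ 2 * (9 / 10) ^ n := PTree.yuleMean_inv_c_le_pow hn
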